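/- The group with presentation ⟨ζ, η ∣ ηζη⁻¹ζη = 1⟩ is not isomorphic to the infinite cyclic group ℤ. -/

import Mathlib

/-- The generator ζ of the free group on two generators. -/
def zeta : FreeGroup (Fin 2) := FreeGroup.of 0

/-- The generator η of the free group on two generators. -/
def eta : FreeGroup (Fin 2) := FreeGroup.of 1

/-- The single relator `ηζη⁻¹ζη` of the presentation `⟨ζ, η ∣ ηζη⁻¹ζη = 1⟩`. -/
def trigonRels : Set (FreeGroup (Fin 2)) := {eta * zeta * eta⁻¹ * zeta * eta}

/-! The relator is killed by ζ ↦ (0 1), η ↦ (0 1)(1 2) in `S₃`, where these two do not commute,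
so the group is not abelian. -/

def trigonPermGens : Fin 2 → Equiv.Perm (Fin 3) :=
  ![Equiv.swap 0 1, Equiv.swap 0 1 * Equiv.swap 1 2]

theorem trigonRels_lift_trigonPermGens :
    ∀ r ∈ trigonRels, FreeGroup.lift trigonPermGens r = 1 := by
  rintro r rfl
  simp only [zeta, eta, map_mul, map_inv, FreeGroup.lift_apply_of]
  decide

def trigonToPerm : PresentedGroup trigonRels →* Equiv.Perm (Fin 3) :=
  PresentedGroup.toGroup trigonRels_lift_trigonPermGens

theorem not_commute_trigonPermGens : ¬ Commute (trigonPermGens 0) (trigonPermGens 1) := by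
  rw [Commute, SemiconjBy]
  decide

theorem not_commute_of_zero_of_one :
    ¬ Commute (PresentedGroup.of 0 : PresentedGroup trigonRels) (PresentedGroup.of 1) := fun h =>
  not_commute_trigonPermGens <| by
    simpa only [trigonToPerm, PresentedGroup.toGroup.of] using h.map trigonToPerm

theorem commute_of_mulEquiv {G H : Type*} [Mul G] [CommMagma H] (e : G ≃* H) (x y : G) :
    Commute x y :=
  (Commute.all (e x) (e y)).of_map e.injective

/-- The group `⟨ζ, η ∣ ηζη⁻¹ζη = 1⟩` is not isomorphic to the infinite cyclic
group `ℤ`. -/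
theorem trigon_group_not_iso_int :
    ¬ Nonempty (PresentedGroup trigonRels ≃* Multiplicative ℤ) := by
  rintro ⟨e⟩
  exact not_commute_of_zero_of_one (commute_of_mulEquiv e _ _)
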